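/- arXiv:1812.00592 — 3 statements merged into one kernel-verified Lean document; each statement's English description precedes it below -/
import Mathlib

section
/- Let Ω ⊆ ℝ² be a bounded domain and φ ∈ C⁰(∂Ω). There is a constant C₁, depending only on Ω and φ, such that every solution u ∈ C²(Ω) ∩ C⁰(closure Ω) of the translating soliton equation div(Du/√(1+|Du|²)) = 1/√(1+|Du|²) in Ω with u = φ on ∂Ω satisfies C₁ ≤ u ≤ max_{∂Ω} φ in Ω. -/
open Real Set Filter

/-- First partial derivative of `u` with respect to `x`. -/
noncomputable def pdx (u : ℝ × ℝ → ℝ) (p : ℝ × ℝ) : ℝ := fderiv ℝ u p ((1, 0) : ℝ × ℝ)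

/-- First partial derivative of `u` with respect to `y`. -/
noncomputable def pdy (u : ℝ × ℝ → ℝ) (p : ℝ × ℝ) : ℝ := fderiv ℝ u p ((0, 1) : ℝ × ℝ)

/-- `|Du|²`, the squared norm of the gradient of `u`. -/
noncomputable def gradSq (u : ℝ × ℝ → ℝ) (p : ℝ × ℝ) : ℝ := (pdx u p) ^ 2 + (pdy u p) ^ 2

/-- `√(1+|Du|²)`. -/
noncomputable def Wg (u : ℝ × ℝ → ℝ) (p : ℝ × ℝ) : ℝ := Real.sqrt (1 + gradSq u p)

/-- `div (Du / √(1+|Du|²))`. -/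
noncomputable def divW (u : ℝ × ℝ → ℝ) (p : ℝ × ℝ) : ℝ :=
  pdx (fun q => pdx u q / Wg u q) p + pdy (fun q => pdy u q / Wg u q) p

/-!
Both bounds are weak maximum principles on the compact set `closure Ω`. Multiplying the
equation `div (Du / W) = 1 / W` by `W³`, with `W = √(1 + |Du|²)` and `H = D²u`, it becomes
`tr H + H(Du⊥, Du⊥) = 1 + |Du|²`, where `Du⊥ = (-∂ᵧu, ∂ₓu)`. At an interior maximum of `u`
the Hessian is negative semidefinite and the left side is `≤ 0`, which is impossible; so
`u ≤ max_{∂Ω} φ`. At an interior minimum of `u - |x|²` we have `H ≥ 2 I`, and then the left side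
is at least `4 + 2 |Du|² > 1 + |Du|²`; so `u - |x|²` attains its minimum on `∂Ω`, which gives
`u ≥ min_{∂Ω} φ - max_{closure Ω} |x|²`.
-/

open Topology

section

variable {E : Type*} [NormedAddCommGroup E] [NormedSpace ℝ E]

theorem IsLocalMin.nonneg_of_hasDerivAt_of_hasDerivAt {g g' : ℝ → ℝ} {x c : ℝ}
    (hmin : IsLocalMin g x) (hg : ∀ᶠ t in 𝓝 x, HasDerivAt g (g' t) t)
    (hg' : HasDerivAt g' c x) : 0 ≤ c := by
  have hg'x : g' x = 0 := hmin.hasDerivAt_eq_zero hg.self_of_nhds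
  -- L'Hôpital: `(g t - g x) / (t - x) ^ 2 → c / 2` as `t → x⁺`
  have hlim : Tendsto (fun t => (g t - g x) / (t - x) ^ 2) (𝓝[>] x) (𝓝 (c / 2)) := by
    have hsq : ∀ t, HasDerivAt (fun t => (t - x) ^ 2) (2 * (t - x)) t := fun t => by
      simpa using ((hasDerivAt_id t).sub_const x).fun_pow 2
    refine HasDerivAt.lhopital_zero_nhdsGT
      (nhdsWithin_le_nhds (hg.mono fun t ht => ht.sub_const _)) (.of_forall hsq) ?_ ?_ ?_ ?_
    · filter_upwards [self_mem_nhdsWithin] with t (ht : x < t)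
      have : t - x ≠ 0 := sub_ne_zero.2 ht.ne'
      positivity
    · simpa using (hg.self_of_nhds.continuousAt.tendsto.sub_const (g x)).mono_left
        nhdsWithin_le_nhds
    · simpa using ((hsq x).continuousAt.tendsto).mono_left (nhdsWithin_le_nhds (a := x))
    · have hslope := (hasDerivAt_iff_tendsto_slope.mp hg').mono_left
        (nhdsWithin_mono x fun t (ht : x < t) => ht.ne')
      refine (hslope.div_const 2).congr' ?_
      filter_upwards [self_mem_nhdsWithin] with t (ht : x < t)
      rw [slope_def_field, hg'x, sub_zero, div_div, mul_comm]
  by_contra hc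
  have hneg := hlim.eventually_lt_const (by linarith : c / 2 < 0)
  have hnonneg : ∀ᶠ t in 𝓝[>] x, 0 ≤ (g t - g x) / (t - x) ^ 2 :=
    (hmin.filter_mono nhdsWithin_le_nhds).mono fun t ht =>
      div_nonneg (sub_nonneg.2 ht) (sq_nonneg _)
  obtain ⟨t, h₁, h₂⟩ := (hneg.and hnonneg).exists
  linarith

theorem IsLocalMin.fderiv_fderiv_apply_self_nonneg {f : E → ℝ} {a : E} (hmin : IsLocalMin f a)
    (hf : ContDiffAt ℝ 2 f a) (v : E) : 0 ≤ fderiv ℝ (fderiv ℝ f) a v v := by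
  have hline : ∀ t : ℝ, HasDerivAt (fun t : ℝ => a + t • v) v t := fun t => by
    simpa using ((hasDerivAt_id t).smul_const v).const_add a
  have hline₀ : Tendsto (fun t : ℝ => a + t • v) (𝓝 0) (𝓝 a) := by
    simpa using (hline 0).continuousAt.tendsto
  have hdiff : ∀ᶠ y in 𝓝 a, DifferentiableAt ℝ f y :=
    (hf.eventually (by simp)).mono fun y hy => hy.differentiableAt (by norm_num)
  have hfd : DifferentiableAt ℝ (fderiv ℝ f) a :=
    (hf.fderiv_right (m := 1) (by norm_num)).differentiableAt (by norm_num)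
  refine IsLocalMin.nonneg_of_hasDerivAt_of_hasDerivAt (g := fun t => f (a + t • v))
    (g' := fun t => fderiv ℝ f (a + t • v) v) (x := 0) ?_ ?_ ?_
  · simpa [IsLocalMin, IsMinFilter] using hline₀.eventually hmin
  · exact (hline₀.eventually hdiff).mono fun t ht => ht.hasFDerivAt.comp_hasDerivAt t (hline t)
  · simpa [Function.comp_def] using
      (hfd.hasFDerivAt.clm_apply (hasFDerivAt_const v a)).comp_hasDerivAt_of_eq 0 (hline 0)
        (by simp)

theorem IsLocalMin.fderiv_fderiv_apply_self_le {f g : E → ℝ} {a : E}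
    (hmin : IsLocalMin (f - g) a) (hf : ContDiffAt ℝ 2 f a) (hg : ContDiffAt ℝ 2 g a) (v : E) :
    fderiv ℝ (fderiv ℝ g) a v v ≤ fderiv ℝ (fderiv ℝ f) a v v := by
  have hsub := congrArg (· ![v, v]) (iteratedFDeriv_sub_apply hf hg)
  simp only [iteratedFDeriv_two_apply, sub_apply, Matrix.cons_val_zero,
    Matrix.cons_val_one] at hsub
  linarith [hmin.fderiv_fderiv_apply_self_nonneg (hf.sub hg) v]

theorem IsLocalMax.fderiv_fderiv_apply_self_nonpos {f : E → ℝ} {a : E} (hmax : IsLocalMax f a)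
    (hf : ContDiffAt ℝ 2 f a) (v : E) : fderiv ℝ (fderiv ℝ f) a v v ≤ 0 := by
  have hmin : IsLocalMin (0 - f) a := by
    rw [zero_sub]
    exact hmax.neg
  simpa using hmin.fderiv_fderiv_apply_self_le contDiffAt_const hf v

theorem HasFDerivAt.div_sqrt_one_add {X S : E → ℝ} {X' S' : E →L[ℝ] ℝ} {p : E}
    (hX : HasFDerivAt X X' p) (hS : HasFDerivAt S S' p) (hS₀ : 0 ≤ S p) :
    HasFDerivAt (fun q => X q / √(1 + S q))
      ((√(1 + S p))⁻¹ • X' - (X p / (2 * √(1 + S p) ^ 3)) • S') p := by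
  have hW : 0 < √(1 + S p) := Real.sqrt_pos.2 (by linarith)
  have hinv : HasFDerivAt (fun q => (√(1 + S q))⁻¹)
      (-(√(1 + S p) ^ 2)⁻¹ • (1 / (2 * √(1 + S p))) • S') p :=
    (hasDerivAt_inv hW.ne').comp_hasFDerivAt p ((hS.const_add 1).sqrt (by linarith))
  simp only [div_eq_mul_inv]
  refine (hX.fun_mul hinv).congr_fderiv ?_
  ext v
  simp only [one_div, mul_inv_rev, add_apply, smul_apply, smul_eq_mul, neg_mul, mul_neg,
    sub_apply]
  field_simp
  ring

end

theorem ContinuousLinearMap.apply_mk_apply_mk (B : ℝ × ℝ →L[ℝ] ℝ × ℝ →L[ℝ] ℝ) (x y : ℝ) :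
    B (x, y) (x, y) =
      x ^ 2 * B (1, 0) (1, 0) + x * y * (B (1, 0) (0, 1) + B (0, 1) (1, 0)) +
        y ^ 2 * B (0, 1) (0, 1) := by
  have : ((x, y) : ℝ × ℝ) = x • (1, 0) + y • (0, 1) := by
    ext <;> simp
  rw [this]
  simp only [map_add, map_smul, add_apply, smul_apply, smul_eq_mul]
  ring

theorem fderiv_fderiv_fst_sq_add_snd_sq_apply (q e : ℝ × ℝ) :
    fderiv ℝ (fderiv ℝ fun r : ℝ × ℝ => r.1 ^ 2 + r.2 ^ 2) q e e = 2 * (e.1 ^ 2 + e.2 ^ 2) := by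
  set L₁ := ContinuousLinearMap.fst ℝ ℝ ℝ
  set L₂ := ContinuousLinearMap.snd ℝ ℝ ℝ
  have h₁ : ∀ r, HasFDerivAt (fun r : ℝ × ℝ => r.1) L₁ r := fun _ => hasFDerivAt_fst
  have h₂ : ∀ r, HasFDerivAt (fun r : ℝ × ℝ => r.2) L₂ r := fun _ => hasFDerivAt_snd
  have hD : fderiv ℝ (fun r : ℝ × ℝ => r.1 ^ 2 + r.2 ^ 2) =
      fun r => (2 * r.1) • L₁ + (2 * r.2) • L₂ := by
    funext r
    rw [(((h₁ r).pow 2).fun_add ((h₂ r).pow 2)).fderiv]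
    ext <;> simp [L₁, L₂]
  rw [hD, ((((h₁ q).const_mul 2).smul_const L₁).fun_add
    (((h₂ q).const_mul 2).smul_const L₂)).fderiv]
  simp only [add_apply, ContinuousLinearMap.smulRight_apply, smul_apply,
    ContinuousLinearMap.coe_fst', smul_eq_mul, ContinuousLinearMap.coe_snd', L₁, L₂]
  ring

theorem gradSq_nonneg (u : ℝ × ℝ → ℝ) (p : ℝ × ℝ) : 0 ≤ gradSq u p := by
  unfold gradSq
  positivity

theorem divW_mul_Wg_pow_three {u : ℝ × ℝ → ℝ} {p : ℝ × ℝ} (hu : ContDiffAt ℝ 2 u p) :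
    divW u p * Wg u p ^ 3 =
      fderiv ℝ (fderiv ℝ u) p (1, 0) (1, 0) + fderiv ℝ (fderiv ℝ u) p (0, 1) (0, 1) +
        fderiv ℝ (fderiv ℝ u) p (-pdy u p, pdx u p) (-pdy u p, pdx u p) := by
  set H := fderiv ℝ (fderiv ℝ u) p
  have hH : HasFDerivAt (fderiv ℝ u) H p :=
    ((hu.fderiv_right (m := 1) le_rfl).differentiableAt one_ne_zero).hasFDerivAt
  have hsym : H (0, 1) (1, 0) = H (1, 0) (0, 1) := hu.isSymmSndFDerivAt (by simp) _ _
  have hdir : ∀ e : ℝ × ℝ, HasFDerivAt (fun q => fderiv ℝ u q e) (H.flip e) p := fun e => by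
    simpa only [ContinuousLinearMap.comp_zero, zero_add] using
      hH.clm_apply (hasFDerivAt_const e p)
  have hX : HasFDerivAt (pdx u) (H.flip (1, 0)) p := hdir (1, 0)
  have hY : HasFDerivAt (pdy u) (H.flip (0, 1)) p := hdir (0, 1)
  have hS := (hX.pow 2).fun_add (hY.pow 2)
  have e₁ : pdx (fun q => pdx u q / Wg u q) p = _ :=
    congrArg (· (1, 0)) (hX.div_sqrt_one_add hS (gradSq_nonneg u p)).fderiv
  have e₂ : pdy (fun q => pdy u q / Wg u q) p = _ :=
    congrArg (· (0, 1)) (hY.div_sqrt_one_add hS (gradSq_nonneg u p)).fderiv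
  have hWdef : √(1 + (pdx u p ^ 2 + pdy u p ^ 2)) = Wg u p := rfl
  have hW : Wg u p ^ 2 = 1 + gradSq u p := Real.sq_sqrt (by linarith [gradSq_nonneg u p])
  have hWpos : 0 < Wg u p := Real.sqrt_pos.2 (by linarith [gradSq_nonneg u p])
  rw [divW, e₁, e₂, H.apply_mk_apply_mk (-pdy u p) (pdx u p)]
  simp only [hWdef, Nat.add_one_sub_one, pow_one, nsmul_eq_mul, Nat.cast_ofNat, smul_add,
    sub_apply, smul_apply, ContinuousLinearMap.flip_apply, smul_eq_mul, add_apply, hsym]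
  field_simp
  rw [hW, gradSq]
  ring

theorem hessian_identity_of_translator {u : ℝ × ℝ → ℝ} {p : ℝ × ℝ} (hu : ContDiffAt ℝ 2 u p)
    (hPDE : divW u p = 1 / Wg u p) :
    fderiv ℝ (fderiv ℝ u) p (1, 0) (1, 0) + fderiv ℝ (fderiv ℝ u) p (0, 1) (0, 1) +
      fderiv ℝ (fderiv ℝ u) p (-pdy u p, pdx u p) (-pdy u p, pdx u p) = 1 + gradSq u p := by
  have hWpos : 0 < Wg u p := Real.sqrt_pos.2 (by linarith [gradSq_nonneg u p])
  calc _ = divW u p * Wg u p ^ 3 := (divW_mul_Wg_pow_three hu).symm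
    _ = Wg u p ^ 2 := by rw [hPDE]; field_simp
    _ = 1 + gradSq u p := Real.sq_sqrt (by linarith [gradSq_nonneg u p])

theorem not_isLocalMax_of_translator {u : ℝ × ℝ → ℝ} {p : ℝ × ℝ} (hu : ContDiffAt ℝ 2 u p)
    (hPDE : divW u p = 1 / Wg u p) : ¬IsLocalMax u p := fun hmax => by
  have hid := hessian_identity_of_translator hu hPDE
  linarith [hmax.fderiv_fderiv_apply_self_nonpos hu (1, 0),
    hmax.fderiv_fderiv_apply_self_nonpos hu (0, 1),
    hmax.fderiv_fderiv_apply_self_nonpos hu (-pdy u p, pdx u p), gradSq_nonneg u p]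

theorem not_isLocalMin_sub_fst_sq_add_snd_sq_of_translator {u : ℝ × ℝ → ℝ} {p : ℝ × ℝ}
    (hu : ContDiffAt ℝ 2 u p) (hPDE : divW u p = 1 / Wg u p) :
    ¬IsLocalMin (fun r => u r - (r.1 ^ 2 + r.2 ^ 2)) p := fun hmin => by
  have hle := hmin.fderiv_fderiv_apply_self_le hu (by fun_prop)
  simp only [fderiv_fderiv_fst_sq_add_snd_sq_apply] at hle
  have hid := hessian_identity_of_translator hu hPDE
  have h₁ := hle (1, 0)
  have h₂ := hle (0, 1)
  have h₃ := hle (-pdy u p, pdx u p)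
  dsimp only at h₁ h₂ h₃
  rw [gradSq] at hid
  linarith [sq_nonneg (pdx u p), sq_nonneg (pdy u p)]

section

variable {X α : Type*} [TopologicalSpace X] [TopologicalSpace α] [LinearOrder α]
  [OrderClosedTopology α] {s : Set X} {f : X → α}

theorem IsCompact.exists_mem_frontier_isMinOn_closure (hs : IsCompact (closure s))
    (hne : s.Nonempty) (hf : ContinuousOn f (closure s))
    (hloc : ∀ x ∈ interior s, ¬IsLocalMin f x) : ∃ x ∈ frontier s, IsMinOn f (closure s) x := by
  obtain ⟨x, hx, hmin⟩ := hs.exists_isMinOn hne.closure hf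
  refine ⟨x, ⟨hx, fun hint => hloc x hint ?_⟩, hmin⟩
  exact hmin.isLocalMin (mem_of_superset (mem_interior_iff_mem_nhds.mp hint) subset_closure)

theorem IsCompact.exists_mem_frontier_isMaxOn_closure (hs : IsCompact (closure s))
    (hne : s.Nonempty) (hf : ContinuousOn f (closure s))
    (hloc : ∀ x ∈ interior s, ¬IsLocalMax f x) : ∃ x ∈ frontier s, IsMaxOn f (closure s) x := by
  obtain ⟨x, hx, hmax⟩ := hs.exists_isMaxOn hne.closure hf
  refine ⟨x, ⟨hx, fun hint => hloc x hint ?_⟩, hmax⟩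
  exact hmax.isLocalMax (mem_of_superset (mem_interior_iff_mem_nhds.mp hint) subset_closure)

end

theorem height_estimates_general (Ω : Set (ℝ × ℝ)) (hΩb : Bornology.IsBounded Ω) (φ : ℝ × ℝ → ℝ) :
    ∃ C₁ : ℝ, ∀ u : ℝ × ℝ → ℝ,
      ContDiffOn ℝ 2 u Ω → ContinuousOn u (closure Ω) →
      (∀ p ∈ Ω, divW u p = 1 / Wg u p) →
      (∀ p ∈ frontier Ω, u p = φ p) →
      ∀ p ∈ Ω, C₁ ≤ u p ∧ u p ≤ sSup (φ '' frontier Ω) := by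
  have hK : IsCompact (closure Ω) := hΩb.isCompact_closure
  obtain ⟨R, hR⟩ := (hK.image (f := fun r : ℝ × ℝ => r.1 ^ 2 + r.2 ^ 2) (by fun_prop)).bddAbove
  refine ⟨sInf (φ '' frontier Ω) - R, fun u hu hcont hPDE hbdry p hp => ?_⟩
  have hC2 : ∀ q ∈ interior Ω, ContDiffAt ℝ 2 u q := fun q hq =>
    (hu q (interior_subset hq)).contDiffAt (mem_interior_iff_mem_nhds.mp hq)
  have hφ : φ '' frontier Ω ⊆ u '' closure Ω := by
    rintro _ ⟨q, hq, rfl⟩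
    exact ⟨q, frontier_subset_closure hq, hbdry q hq⟩
  have hbdd := (hK.image_of_continuousOn hcont).isBounded.subset hφ
  constructor
  · obtain ⟨q, hq, hmin⟩ := hK.exists_mem_frontier_isMinOn_closure ⟨p, hp⟩
      (hcont.sub (by fun_prop)) fun q hq =>
        not_isLocalMin_sub_fst_sq_add_snd_sq_of_translator (hC2 q hq) (hPDE q (interior_subset hq))
    have hRq : q.1 ^ 2 + q.2 ^ 2 ≤ R := hR ⟨q, frontier_subset_closure hq, rfl⟩
    calc sInf (φ '' frontier Ω) - R ≤ u q - (q.1 ^ 2 + q.2 ^ 2) := by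
          rw [hbdry q hq]
          linarith [csInf_le hbdd.bddBelow (mem_image_of_mem φ hq)]
      _ ≤ u p - (p.1 ^ 2 + p.2 ^ 2) := hmin (subset_closure hp)
      _ ≤ u p := sub_le_self _ (by positivity)
  · obtain ⟨q, hq, hmax⟩ := hK.exists_mem_frontier_isMaxOn_closure ⟨p, hp⟩ hcont fun q hq =>
      not_isLocalMax_of_translator (hC2 q hq) (hPDE q (interior_subset hq))
    calc u p ≤ u q := hmax (subset_closure hp)
      _ = φ q := hbdry q hq
      _ ≤ sSup (φ '' frontier Ω) := le_csSup hbdd.bddAbove (mem_image_of_mem φ hq)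

/-- Height estimates for solutions of the Dirichlet problem for the translating
soliton equation. -/
theorem height_estimates (Ω : Set (ℝ × ℝ)) (hΩo : IsOpen Ω) (hΩc : IsConnected Ω)
    (hΩb : Bornology.IsBounded Ω) (φ : ℝ × ℝ → ℝ) (hφ : ContinuousOn φ (frontier Ω)) :
    ∃ C₁ : ℝ, ∀ u : ℝ × ℝ → ℝ,
      ContDiffOn ℝ 2 u Ω → ContinuousOn u (closure Ω) →
      (∀ p ∈ Ω, divW u p = 1 / Wg u p) →
      (∀ p ∈ frontier Ω, u p = φ p) →
      ∀ p ∈ Ω, C₁ ≤ u p ∧ u p ≤ sSup (φ '' frontier Ω) :=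
  height_estimates_general Ω hΩb φ
end

section
/- There exist R > 0 and a function u ∈ C²([0,R]) with u(0) = 0 and u'(0) = 0 satisfying (r u'(r)/√(1+u'(r)²))' = r/√(1+u'(r)²) for all r ∈ (0,R); moreover u''(0) = 1/2, i.e. u''(r) → 1/2 as r → 0⁺. -/
/-!
Write `p = u' / √(1 + u'²)`, the sine of the inclination angle of the profile curve. The soliton
equation becomes `(r p)' = r √(1 - p²)`, which with `p(0) = 0` integrates to
`p(r) = r⁻¹ ∫₀ʳ s √(1 - p(s)²) ds = r ∫₀¹ t √(1 - p(rt)²) dt`. On `[0, 1/2]` the right-hand side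
is a contraction of the ball of radius `1/2` in the bounded continuous functions (`r ≤ 1/2`,
`∫₀¹ t dt = 1/2`, and `√(1 - x²)` is `1`-Lipschitz for `|x| ≤ 1/2`), so Banach's fixed point
theorem produces `p`. Since `p(r)/r → 1/2`, `p'(0) = 1/2`, and `u = ∫₀ʳ p / √(1 - p²)` has
`u''(0) = p'(0) = 1/2`.
-/

open Real Set Filter Topology intervalIntegral BoundedContinuousFunction

noncomputable section

theorem contDiffOn_two_of_hasDerivWithinAt {𝕜 F : Type*} [NontriviallyNormedField 𝕜]
    [NormedAddCommGroup F] [NormedSpace 𝕜 F] {s : Set 𝕜} (hs : UniqueDiffOn 𝕜 s)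
    {f f' f'' : 𝕜 → F} (hf : ∀ x ∈ s, HasDerivWithinAt f (f' x) s x)
    (hf' : ∀ x ∈ s, HasDerivWithinAt f' (f'' x) s x) (hf'' : ContinuousOn f'' s) :
    ContDiffOn 𝕜 2 f s := by
  have h1 : ContDiffOn 𝕜 1 f' s := (contDiffOn_one_iff_derivWithin hs).2
    ⟨fun x hx => (hf' x hx).differentiableWithinAt,
      hf''.congr fun x hx => (hf' x hx).derivWithin (hs x hx)⟩
  rw [show (2 : WithTop ℕ∞) = 1 + 1 from rfl, contDiffOn_succ_iff_derivWithin hs]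
  exact ⟨fun x hx => (hf x hx).differentiableWithinAt, by simp,
    h1.congr fun x hx => (hf x hx).derivWithin (hs x hx)⟩

theorem sqrt_one_sub_sq_le_one (x : ℝ) : √(1 - x ^ 2) ≤ 1 :=
  Real.sqrt_le_one.2 (by nlinarith [sq_nonneg x])

theorem abs_sqrt_one_sub_sq_sub_sqrt_le {x y : ℝ} (hx : |x| ≤ 1 / 2) (hy : |y| ≤ 1 / 2) :
    |√(1 - x ^ 2) - √(1 - y ^ 2)| ≤ |x - y| := by
  obtain ⟨hx₁, hx₂⟩ := abs_le.1 hx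
  obtain ⟨hy₁, hy₂⟩ := abs_le.1 hy
  have ha := Real.sq_sqrt (show 0 ≤ 1 - x ^ 2 by nlinarith)
  have hb := Real.sq_sqrt (show 0 ≤ 1 - y ^ 2 by nlinarith)
  have ha' : 1 / 2 ≤ √(1 - x ^ 2) := Real.le_sqrt_of_sq_le (by nlinarith)
  have hb' : 1 / 2 ≤ √(1 - y ^ 2) := Real.le_sqrt_of_sq_le (by nlinarith)
  -- `(a - b)(a + b) = (y - x)(y + x)` for `a = √(1 - x²)`, `b = √(1 - y²)`,
  -- and `a + b ≥ 1 ≥ |x + y|`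
  rw [← sq_le_sq]
  nlinarith [sq_nonneg (√(1 - x ^ 2) - √(1 - y ^ 2)), sq_nonneg (x - y),
    mul_nonneg (sq_nonneg (√(1 - x ^ 2) - √(1 - y ^ 2)))
      (show 0 ≤ (√(1 - x ^ 2) + √(1 - y ^ 2)) ^ 2 - 1 by nlinarith),
    mul_nonneg (sq_nonneg (x - y)) (show 0 ≤ 1 - (x + y) ^ 2 by nlinarith)]

theorem sqrt_one_add_sq_div_sqrt_one_sub_sq {y : ℝ} (hy : y ^ 2 < 1) :
    √(1 + (y / √(1 - y ^ 2)) ^ 2) = (√(1 - y ^ 2))⁻¹ := by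
  have h : 0 < 1 - y ^ 2 := by linarith
  rw [← Real.sqrt_inv, div_pow, Real.sq_sqrt h.le]
  congr 1
  field_simp
  ring

theorem hasDerivAt_div_sqrt_one_sub_sq {y : ℝ} (hy : y ^ 2 < 1) :
    HasDerivAt (fun x => x / √(1 - x ^ 2)) (((1 - y ^ 2) * √(1 - y ^ 2))⁻¹) y := by
  have h : 0 < 1 - y ^ 2 := by linarith
  have hs := Real.sqrt_pos.2 h
  have hden : HasDerivAt (fun x => √(1 - x ^ 2)) (-(2 * y) / (2 * √(1 - y ^ 2))) y := by
    simpa using ((hasDerivAt_pow 2 y).const_sub 1).sqrt h.ne'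
  refine ((hasDerivAt_id' y).fun_div hden hs.ne').congr_deriv ?_
  field_simp
  rw [Real.sq_sqrt h.le]
  ring

/-- For `r ≠ 0`, `radialAvg f r = r⁻² ∫₀ʳ s √(1 - f(s)²) ds` (`sq_mul_radialAvg`);
this form is continuous at `r = 0`. -/
def radialAvg (f : ℝ → ℝ) (r : ℝ) : ℝ := ∫ t in (0 : ℝ)..1, t * √(1 - f (r * t) ^ 2)

theorem continuous_radialAvg {f : ℝ → ℝ} (hf : Continuous f) : Continuous (radialAvg f) :=
  continuous_parametric_intervalIntegral_of_continuous' (by fun_prop) 0 1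

theorem abs_radialAvg_le (f : ℝ → ℝ) (r : ℝ) : |radialAvg f r| ≤ 1 / 2 := by
  have h := norm_integral_le_of_norm_le (f := fun t => t * √(1 - f (r * t) ^ 2)) zero_le_one
    (Eventually.of_forall fun t ht => ?_) (intervalIntegrable_id (μ := MeasureTheory.volume))
  · simpa [radialAvg, integral_id] using h
  · rw [norm_mul, Real.norm_of_nonneg ht.1.le, Real.norm_of_nonneg (Real.sqrt_nonneg _)]
    exact mul_le_of_le_one_right ht.1.le (sqrt_one_sub_sq_le_one _)

theorem radialAvg_zero_right (f : ℝ → ℝ) : radialAvg f 0 = √(1 - f 0 ^ 2) / 2 := by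
  simp [radialAvg, integral_mul_const, integral_id, div_eq_inv_mul]

theorem abs_radialAvg_sub_le {f g : ℝ → ℝ} (hf : Continuous f) (hg : Continuous g)
    (hf₁ : ∀ x, |f x| ≤ 1 / 2) (hg₁ : ∀ x, |g x| ≤ 1 / 2) {C : ℝ} (hC : ∀ x, |f x - g x| ≤ C)
    (r : ℝ) : |radialAvg f r - radialAvg g r| ≤ C / 2 := by
  rw [radialAvg, radialAvg, ← integral_sub ((by fun_prop : Continuous _).intervalIntegrable _ _)
    ((by fun_prop : Continuous _).intervalIntegrable _ _)]
  have h := norm_integral_le_of_norm_le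
    (f := fun t => t * √(1 - f (r * t) ^ 2) - t * √(1 - g (r * t) ^ 2)) (g := fun t => t * C)
    zero_le_one (Eventually.of_forall fun t ht => ?_)
    ((intervalIntegrable_id (μ := MeasureTheory.volume)).mul_const C)
  · simpa [integral_const_mul, integral_id, div_eq_inv_mul] using h
  · rw [← mul_sub, norm_mul, Real.norm_of_nonneg ht.1.le, Real.norm_eq_abs]
    exact mul_le_mul_of_nonneg_left
      ((abs_sqrt_one_sub_sq_sub_sqrt_le (hf₁ _) (hg₁ _)).trans (hC _)) ht.1.le

theorem sq_mul_radialAvg (f : ℝ → ℝ) {r : ℝ} (hr : r ≠ 0) :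
    r ^ 2 * radialAvg f r = ∫ s in (0 : ℝ)..r, s * √(1 - f s ^ 2) := by
  have h := integral_comp_mul_left (fun s => s * √(1 - f s ^ 2)) hr (a := 0) (b := 1)
  rw [mul_zero, mul_one, smul_eq_mul] at h
  rw [eq_inv_mul_iff_mul_eq₀ hr] at h
  rw [← h, radialAvg, ← integral_const_mul, ← integral_const_mul]
  congr 1; ext t; ring

theorem abs_mul_radialAvg_le (f : ℝ → ℝ) {r : ℝ} (hr : r ∈ Icc (0 : ℝ) (1 / 2)) :
    |r * radialAvg f r| ≤ 1 / 4 := by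
  rw [abs_mul, abs_of_nonneg hr.1]
  nlinarith [hr.2, abs_radialAvg_le f r, abs_nonneg (radialAvg f r)]

def profileMap (f : ℝ →ᵇ ℝ) : ℝ →ᵇ ℝ :=
  .ofNormedAddCommGroup (IccExtend one_half_pos.le fun r => r * radialAvg f r)
    (Continuous.Icc_extend' (continuous_subtype_val.mul
      ((continuous_radialAvg f.continuous).comp continuous_subtype_val))) (1 / 4)
    fun r => by
      rw [IccExtend_apply, Real.norm_eq_abs]
      exact abs_mul_radialAvg_le f (projIcc _ _ one_half_pos.le r).2

theorem profileMap_apply (f : ℝ →ᵇ ℝ) (r : ℝ) :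
    profileMap f r = projIcc 0 (1 / 2) one_half_pos.le r *
      radialAvg f (projIcc 0 (1 / 2) one_half_pos.le r) :=
  rfl

theorem profileMap_apply_of_mem (f : ℝ →ᵇ ℝ) {r : ℝ} (hr : r ∈ Icc (0 : ℝ) (1 / 2)) :
    profileMap f r = r * radialAvg f r := by
  rw [profileMap_apply, projIcc_of_mem _ hr]

theorem norm_profileMap_le (f : ℝ →ᵇ ℝ) : ‖profileMap f‖ ≤ 1 / 4 :=
  norm_ofNormedAddCommGroup_le _ (by norm_num) _

theorem dist_profileMap_le {f g : ℝ →ᵇ ℝ} (hf : ‖f‖ ≤ 1 / 2) (hg : ‖g‖ ≤ 1 / 2) :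
    dist (profileMap f) (profileMap g) ≤ 1 / 4 * dist f g := by
  have hbound (h : ℝ →ᵇ ℝ) (hh : ‖h‖ ≤ 1 / 2) (x : ℝ) : |h x| ≤ 1 / 2 :=
    (h.norm_coe_le_norm x).trans hh
  refine (dist_le (by positivity)).2 fun r => ?_
  rw [Real.dist_eq, profileMap_apply, profileMap_apply, ← mul_sub, abs_mul]
  generalize projIcc 0 (1 / 2) one_half_pos.le r = s
  have hdiff := abs_radialAvg_sub_le f.continuous g.continuous (hbound f hf) (hbound g hg)
    (fun x => dist_coe_le_dist (f := f) (g := g) x) s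
  rw [abs_of_nonneg s.2.1]
  nlinarith [s.2.2, abs_nonneg (radialAvg f s - radialAvg g s)]

/-- `p = sin θ` for the inclination angle `θ` of the profile, so that `u' = tan θ = p / √(1 - p²)`
(`heightOf`); the last field is `(r p)' = r √(1 - p²)` integrated from `0`. -/
structure IsSineProfile (p : ℝ → ℝ) : Prop where
  continuous : Continuous p
  abs_le_half : ∀ r, |p r| ≤ 1 / 2
  eq_mul_radialAvg : ∀ r ∈ Icc (0 : ℝ) (1 / 2), p r = r * radialAvg p r

theorem exists_isSineProfile : ∃ p, IsSineProfile p := by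
  have hmaps : MapsTo profileMap (Metric.closedBall 0 (1 / 2)) (Metric.closedBall 0 (1 / 2)) :=
    fun f _ => mem_closedBall_zero_iff.2 ((norm_profileMap_le f).trans (by norm_num))
  have hcontr : ContractingWith (1 / 4) (hmaps.restrict _ _ _) := by
    refine ⟨by rw [← NNReal.coe_lt_coe]; norm_num, LipschitzWith.of_dist_le_mul fun f g => ?_⟩
    rw [Subtype.dist_eq, Subtype.dist_eq, MapsTo.val_restrict_apply, MapsTo.val_restrict_apply]
    exact_mod_cast dist_profileMap_le (mem_closedBall_zero_iff.1 f.2)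
      (mem_closedBall_zero_iff.1 g.2)
  obtain ⟨p, hp, hfix, -⟩ := hcontr.exists_fixedPoint' Metric.isClosed_closedBall.isComplete
    hmaps (Metric.mem_closedBall_self (by norm_num)) (edist_ne_top _ _)
  refine ⟨p, ⟨p.continuous, fun r => (p.norm_coe_le_norm r).trans
    (mem_closedBall_zero_iff.1 hp), fun r hr => ?_⟩⟩
  rw [← profileMap_apply_of_mem p hr, hfix]

def heightOf (p : ℝ → ℝ) (r : ℝ) : ℝ := ∫ s in (0 : ℝ)..r, p s / √(1 - p s ^ 2)

namespace IsSineProfile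

variable {p : ℝ → ℝ}

theorem sq_lt_one (hp : IsSineProfile p) (r : ℝ) : p r ^ 2 < 1 := by
  obtain ⟨h₁, h₂⟩ := abs_le.1 (hp.abs_le_half r)
  nlinarith

theorem apply_zero (hp : IsSineProfile p) : p 0 = 0 := by
  simpa using hp.eq_mul_radialAvg 0 ⟨le_rfl, by norm_num⟩

theorem radialAvg_zero (hp : IsSineProfile p) : radialAvg p 0 = 1 / 2 := by
  simp [radialAvg_zero_right, hp.apply_zero]

theorem mul_self_eq_integral (hp : IsSineProfile p) {r : ℝ} (hr : r ∈ Icc (0 : ℝ) (1 / 2)) :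
    r * p r = ∫ s in (0 : ℝ)..r, s * √(1 - p s ^ 2) := by
  rcases hr.1.eq_or_lt with rfl | hr₀
  · simp
  · rw [← sq_mul_radialAvg p hr₀.ne', hp.eq_mul_radialAvg r hr]
    ring

theorem hasDerivAt_mul_self (hp : IsSineProfile p) {r : ℝ} (hr : r ∈ Ioo (0 : ℝ) (1 / 2)) :
    HasDerivAt (fun s => s * p s) (r * √(1 - p r ^ 2)) r := by
  have hc : Continuous fun s => s * √(1 - p s ^ 2) := by
    have := hp.continuous
    fun_prop
  refine (integral_hasDerivAt_right (hc.intervalIntegrable 0 r)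
    (hc.stronglyMeasurableAtFilter _ _) hc.continuousAt).congr_of_eventuallyEq ?_
  filter_upwards [Ioo_mem_nhds hr.1 hr.2] with s hs
    using hp.mul_self_eq_integral (Ioo_subset_Icc_self hs)

theorem hasDerivAt (hp : IsSineProfile p) {r : ℝ} (hr : r ∈ Ioo (0 : ℝ) (1 / 2)) :
    HasDerivAt p (√(1 - p r ^ 2) - radialAvg p r) r := by
  refine (((hp.hasDerivAt_mul_self hr).fun_div (hasDerivAt_id' r)
    hr.1.ne').congr_of_eventuallyEq ?_).congr_deriv ?_
  · filter_upwards [Ioi_mem_nhds hr.1] with s (hs : 0 < s)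
    field_simp
  · have := hr.1.ne'
    field_simp
    linear_combination -hp.eq_mul_radialAvg r (Ioo_subset_Icc_self hr)

theorem hasDerivWithinAt_zero (hp : IsSineProfile p) : HasDerivWithinAt p (1 / 2) (Ici 0) 0 := by
  rw [← hasDerivWithinAt_Ioi_iff_Ici, hasDerivWithinAt_iff_tendsto_slope' self_notMem_Ioi,
    ← hp.radialAvg_zero]
  refine (((continuous_radialAvg hp.continuous).tendsto 0).mono_left
    nhdsWithin_le_nhds).congr' ?_
  filter_upwards [Ioc_mem_nhdsGT (show (0 : ℝ) < 1 / 2 by norm_num)] with r hr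
  rw [slope_def_field, hp.eq_mul_radialAvg r (Ioc_subset_Icc_self hr), hp.apply_zero,
    sub_zero, sub_zero, mul_div_cancel_left₀ _ hr.1.ne']

theorem hasDerivWithinAt (hp : IsSineProfile p) {r : ℝ} (hr : r ∈ Ico (0 : ℝ) (1 / 2)) :
    HasDerivWithinAt p (√(1 - p r ^ 2) - radialAvg p r) (Ici 0) r := by
  rcases hr.1.eq_or_lt with rfl | hr₀
  · convert hp.hasDerivWithinAt_zero using 1
    rw [hp.apply_zero, hp.radialAvg_zero]
    norm_num
  · exact (hp.hasDerivAt ⟨hr₀, hr.2⟩).hasDerivWithinAt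

theorem continuous_tan (hp : IsSineProfile p) : Continuous fun r => p r / √(1 - p r ^ 2) :=
  hp.continuous.div (by have := hp.continuous; fun_prop)
    fun r => (Real.sqrt_pos.2 (sub_pos.2 (hp.sq_lt_one r))).ne'

theorem hasDerivAt_heightOf (hp : IsSineProfile p) (r : ℝ) :
    HasDerivAt (heightOf p) (p r / √(1 - p r ^ 2)) r :=
  integral_hasDerivAt_right (hp.continuous_tan.intervalIntegrable 0 r)
    (hp.continuous_tan.stronglyMeasurableAtFilter _ _) hp.continuous_tan.continuousAt

theorem deriv_heightOf (hp : IsSineProfile p) :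
    deriv (heightOf p) = fun r => p r / √(1 - p r ^ 2) :=
  funext fun r => (hp.hasDerivAt_heightOf r).deriv

theorem hasDerivWithinAt_tan (hp : IsSineProfile p) {r : ℝ} (hr : r ∈ Ico (0 : ℝ) (1 / 2)) :
    HasDerivWithinAt (fun s => p s / √(1 - p s ^ 2))
      (((1 - p r ^ 2) * √(1 - p r ^ 2))⁻¹ * (√(1 - p r ^ 2) - radialAvg p r)) (Ici 0) r :=
  (hasDerivAt_div_sqrt_one_sub_sq (hp.sq_lt_one r)).comp_hasDerivWithinAt r
    (hp.hasDerivWithinAt hr)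

theorem continuous_deriv_tan (hp : IsSineProfile p) :
    Continuous fun r =>
      ((1 - p r ^ 2) * √(1 - p r ^ 2))⁻¹ * (√(1 - p r ^ 2) - radialAvg p r) := by
  have := hp.continuous
  have := continuous_radialAvg hp.continuous
  refine Continuous.mul (Continuous.inv₀ (by fun_prop) fun r => ?_) (by fun_prop)
  have h := sub_pos.2 (hp.sq_lt_one r)
  exact (mul_pos h (Real.sqrt_pos.2 h)).ne'

theorem contDiffOn_heightOf (hp : IsSineProfile p) {R : ℝ} (hR₀ : 0 < R) (hR : R < 1 / 2) :
    ContDiffOn ℝ 2 (heightOf p) (Icc 0 R) :=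
  contDiffOn_two_of_hasDerivWithinAt (uniqueDiffOn_Icc hR₀)
    (fun r _ => (hp.hasDerivAt_heightOf r).hasDerivWithinAt)
    (fun _ hr => (hp.hasDerivWithinAt_tan ⟨hr.1, hr.2.trans_lt hR⟩).mono Icc_subset_Ici_self)
    hp.continuous_deriv_tan.continuousOn

theorem tendsto_deriv_deriv_heightOf (hp : IsSineProfile p) :
    Tendsto (deriv (deriv (heightOf p))) (𝓝[>] 0) (𝓝 (1 / 2)) := by
  have h₀ :
      ((1 - p 0 ^ 2) * √(1 - p 0 ^ 2))⁻¹ * (√(1 - p 0 ^ 2) - radialAvg p 0) = 1 / 2 := by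
    rw [hp.apply_zero, hp.radialAvg_zero]
    norm_num
  refine ((h₀ ▸ hp.continuous_deriv_tan.tendsto 0).mono_left nhdsWithin_le_nhds).congr' ?_
  filter_upwards [Ioo_mem_nhdsGT (show (0 : ℝ) < 1 / 2 by norm_num)] with r hr
  rw [hp.deriv_heightOf, ((hp.hasDerivWithinAt_tan (Ioo_subset_Ico_self hr)).hasDerivAt
    (Ici_mem_nhds hr.1)).deriv]

theorem soliton_eq (hp : IsSineProfile p) {r : ℝ} (hr : r ∈ Ioo (0 : ℝ) (1 / 2)) :
    deriv (fun s => s * deriv (heightOf p) s / √(1 + deriv (heightOf p) s ^ 2)) r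
      = r / √(1 + deriv (heightOf p) r ^ 2) := by
  have hsqrt (s : ℝ) := sqrt_one_add_sq_div_sqrt_one_sub_sq (hp.sq_lt_one s)
  have hpos (s : ℝ) := Real.sqrt_pos.2 (sub_pos.2 (hp.sq_lt_one s))
  simp only [hp.deriv_heightOf, hsqrt]
  have hfun : (fun s => s * (p s / √(1 - p s ^ 2)) / (√(1 - p s ^ 2))⁻¹) = fun s => s * p s := by
    funext s
    field_simp [(hpos s).ne']
  rw [hfun, (hp.hasDerivAt_mul_self hr).deriv, div_inv_eq_mul]

end IsSineProfile

end

/-- Existence of the bowl soliton: a `C²` solution of the radial translating soliton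
equation `(r u'/√(1+u'²))' = r/√(1+u'²)` with `u(0) = u'(0) = 0`, and `u''(r) → 1/2`
as `r → 0⁺`. -/
theorem bowl_soliton_exists : ∃ R > (0 : ℝ), ∃ u : ℝ → ℝ,
    ContDiffOn ℝ 2 u (Set.Icc 0 R) ∧ u 0 = 0 ∧
    derivWithin u (Set.Icc 0 R) 0 = 0 ∧
    (∀ r ∈ Set.Ioo (0 : ℝ) R,
      deriv (fun s => s * deriv u s / Real.sqrt (1 + (deriv u s) ^ 2)) r
        = r / Real.sqrt (1 + (deriv u r) ^ 2)) ∧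
    Filter.Tendsto (fun r => deriv (deriv u) r) (nhdsWithin 0 (Set.Ioi 0))
      (nhds (1 / 2)) := by
  obtain ⟨p, hp⟩ := exists_isSineProfile
  have hR : (0 : ℝ) < 1 / 4 := by norm_num
  refine ⟨1 / 4, hR, heightOf p, hp.contDiffOn_heightOf hR (by norm_num), integral_same, ?_,
    fun r hr => hp.soliton_eq ⟨hr.1, hr.2.trans (by norm_num)⟩, hp.tendsto_deriv_deriv_heightOf⟩
  rw [(hp.hasDerivAt_heightOf 0).hasDerivWithinAt.derivWithin
    (uniqueDiffOn_Icc hR 0 (left_mem_Icc.2 hR.le)), hp.apply_zero, zero_div]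
end

section
/- Let μ > 0 be a constant and let Ω ⊆ ℝ² be a bounded domain with diam(Ω) < 1/μ, and let φ ∈ C⁰(∂Ω). Then there is a constant C₁, depending only on Ω and φ, such that every solution u ∈ C²(Ω) ∩ C⁰(closure Ω) of div(Du/√(1+|Du|²)) = 1/√(1+|Du|²) + μ in Ω with u = φ on ∂Ω satisfies C₁ ≤ u ≤ max_{∂Ω} φ in Ω. -/
open Real Set Filter

open Topology

/-!
The upper bound is the maximum principle: at an interior maximum the Hessian of `u` is
nonpositive, and then so is `div (Du / W)`, while the equation makes it `1 / W + μ > 0`.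

For the lower bound `u` is compared with the paraboloid `v = β |x - c|²`, `β = μ + 2`, where `c` is
the centre of the bounding square of `Ω` (the metric of `ℝ × ℝ` is the sup metric), so that
`|x - c|² ≤ diam Ω ² / 2` on `closure Ω`. At an interior minimum of `u - v` we would have `Du = Dv`
and `D²u ≥ 2β I`; ellipticity of the operator then gives `div (Du / W) ≥ 2β (1 + W²) / W³`.
Since `μ · diam Ω < 1`, the slope of `v` on `Ω` keeps `μ W ≤ 2β - 1`, and so
`1 / W + μ < 2β (1 + W²) / W³`, a contradiction. Hence `u - v` is minimal on `∂Ω`.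
-/

section Calculus

theorem IsLocalMin.deriv_deriv_nonneg {g : ℝ → ℝ} {x₀ : ℝ} (hmin : IsLocalMin g x₀)
    (hg : ContinuousAt g x₀) : 0 ≤ deriv (deriv g) x₀ := by
  by_contra! hneg
  have hmax := isLocalMax_of_deriv_deriv_neg hneg hmin.deriv_eq_zero hg
  have hconst : g =ᶠ[𝓝 x₀] fun _ => g x₀ :=
    (hmin.and hmax).mono fun x hx => le_antisymm hx.2 hx.1
  have hderiv : deriv g =ᶠ[𝓝 x₀] fun _ => 0 :=
    hconst.eventuallyEq_nhds.mono fun x hx => hx.deriv_eq.trans (deriv_const x _)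
  simp [hderiv.deriv_eq] at hneg

variable {E : Type*} [NormedAddCommGroup E] [NormedSpace ℝ E]

theorem ContDiffAt.deriv_deriv_comp_add_smul {f : E → ℝ} {p : E} (hf : ContDiffAt ℝ 2 f p)
    (e : E) : deriv (deriv fun t : ℝ => f (p + t • e)) 0 = fderiv ℝ (fderiv ℝ f) p e e := by
  have hline : ∀ t : ℝ, HasDerivAt (fun t : ℝ => p + t • e) e t := fun t => by
    simpa using ((hasDerivAt_id t).smul_const e).const_add p
  have hdiff : ∀ᶠ t in 𝓝 (0 : ℝ), DifferentiableAt ℝ f (p + t • e) := by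
    have hnear := (hf.eventually (by simp)).mono fun q hq => hq.differentiableAt two_ne_zero
    exact (hline 0).continuousAt.tendsto.eventually (by simpa using hnear)
  have hderiv : deriv (fun t : ℝ => f (p + t • e)) =ᶠ[𝓝 0] fun t => fderiv ℝ f (p + t • e) e :=
    hdiff.mono fun t ht => (ht.hasFDerivAt.comp_hasDerivAt t (hline t)).deriv
  have hD : HasFDerivAt (fderiv ℝ f) (fderiv ℝ (fderiv ℝ f) p) p :=
    ((hf.fderiv_right (m := 1) (by norm_num)).differentiableAt one_ne_zero).hasFDerivAt
  have h := (hD.comp_hasDerivAt_of_eq (0 : ℝ) (hline 0) (by simp)).clm_apply (hasDerivAt_const 0 e)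
  rw [hderiv.deriv_eq]
  simpa using h.deriv

theorem IsLocalMin.fderiv_fderiv_nonneg {f : E → ℝ} {p : E} (hmin : IsLocalMin f p)
    (hf : ContDiffAt ℝ 2 f p) (e : E) : 0 ≤ fderiv ℝ (fderiv ℝ f) p e e := by
  have hline : Continuous fun t : ℝ => p + t • e := by fun_prop
  have h0 : p + (0 : ℝ) • e = p := by simp
  have hmin' : IsLocalMin f (p + (0 : ℝ) • e) := by rwa [h0]
  rw [← hf.deriv_deriv_comp_add_smul e]
  exact (hmin'.comp_continuous (g := fun t : ℝ => p + t • e) hline.continuousAt).deriv_deriv_nonneg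
    (hf.continuousAt.comp_of_eq hline.continuousAt h0)

theorem IsLocalMin.fderiv_fderiv_le_of_sub {u v : E → ℝ} {p : E} (hmin : IsLocalMin (u - v) p)
    (hu : ContDiffAt ℝ 2 u p) (hv : ContDiffAt ℝ 2 v p) (e : E) :
    fderiv ℝ (fderiv ℝ v) p e e ≤ fderiv ℝ (fderiv ℝ u) p e e := by
  have hsecond : ∀ f : E → ℝ, fderiv ℝ (fderiv ℝ f) p e e = iteratedFDeriv ℝ 2 f p ![e, e] :=
    fun f => by simp [iteratedFDeriv_two_apply]
  have h := hmin.fderiv_fderiv_nonneg (hu.sub hv) e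
  rw [hsecond] at h
  rw [hsecond, hsecond, ← sub_nonneg, ← sub_apply, ← iteratedFDeriv_sub_apply hu hv]
  exact h

theorem IsLocalMax.fderiv_fderiv_nonpos {u : E → ℝ} {p : E} (hmax : IsLocalMax u p)
    (hu : ContDiffAt ℝ 2 u p) (e : E) : fderiv ℝ (fderiv ℝ u) p e e ≤ 0 := by
  have hmin : IsLocalMin ((fun _ => (0 : ℝ)) - u) p := by
    simpa only [Pi.sub_def, zero_sub] using hmax.neg
  simpa using hmin.fderiv_fderiv_le_of_sub contDiffAt_const hu e

theorem fderiv_div_sqrt_one_add_sq_add_sq {P Q W : E → ℝ} {P' Q' : E →L[ℝ] ℝ} {p : E}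
    (hP : HasFDerivAt P P' p) (hQ : HasFDerivAt Q Q' p) (hW : W = fun q => √(1 + (P q ^ 2 + Q q ^ 2))) (v : E) :
    fderiv ℝ (fun q => P q / W q) p v = (P' v * (1 + Q p ^ 2) - P p * Q p * Q' v) / W p ^ 3 := by
  subst hW
  have hpos : 0 < 1 + (P p ^ 2 + Q p ^ 2) := by positivity
  have hsqrt := (((hP.pow 2).add (hQ.pow 2)).const_add 1).sqrt hpos.ne'
  have hinv := (hasDerivAt_inv (Real.sqrt_pos.mpr hpos).ne').comp_hasFDerivAt p hsqrt
  have hdiv : HasFDerivAt (fun q => P q / √(1 + (P q ^ 2 + Q q ^ 2))) _ p := hP.mul hinv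
  rw [hdiv.fderiv]
  simp only [Pi.add_apply, one_div, mul_inv_rev, Nat.add_one_sub_one, pow_one, nsmul_eq_mul,
    Nat.cast_ofNat, smul_add, neg_smul, smul_neg, add_apply, neg_apply, smul_apply, smul_eq_mul]
  field_simp
  rw [Real.sq_sqrt hpos.le]
  ring

theorem ContDiffAt.hasFDerivAt_fderiv_apply {u : E → ℝ} {p : E} (hu : ContDiffAt ℝ 2 u p) (w : E) :
    HasFDerivAt (fun q => fderiv ℝ u q w) ((fderiv ℝ (fderiv ℝ u) p).flip w) p := by
  have hD : HasFDerivAt (fderiv ℝ u) (fderiv ℝ (fderiv ℝ u) p) p :=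
    ((hu.fderiv_right (m := 1) (by norm_num)).differentiableAt one_ne_zero).hasFDerivAt
  simpa using hD.clm_apply (hasFDerivAt_const w p)

end Calculus

theorem Wg_sq (u : ℝ × ℝ → ℝ) (p : ℝ × ℝ) : Wg u p ^ 2 = 1 + (pdx u p ^ 2 + pdy u p ^ 2) :=
  Real.sq_sqrt (by unfold gradSq; positivity)

theorem Wg_pos (u : ℝ × ℝ → ℝ) (p : ℝ × ℝ) : 0 < Wg u p :=
  Real.sqrt_pos.mpr (by unfold gradSq; positivity)

/-- The numerator `(1 + u_y²) u_xx - 2 u_x u_y u_xy + (1 + u_x²) u_yy` of the mean curvature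
operator, written as a sum of three values of the Hessian quadratic form. -/
theorem divW_eq {u : ℝ × ℝ → ℝ} {p : ℝ × ℝ} (hu : ContDiffAt ℝ 2 u p) :
    divW u p = (fderiv ℝ (fderiv ℝ u) p (1, 0) (1, 0) + fderiv ℝ (fderiv ℝ u) p (0, 1) (0, 1)
      + fderiv ℝ (fderiv ℝ u) p (pdy u p, -pdx u p) (pdy u p, -pdx u p)) / Wg u p ^ 3 := by
  have hWy : Wg u = fun q => √(1 + (pdy u q ^ 2 + pdx u q ^ 2)) := by
    funext q
    rw [Wg, gradSq, add_comm (pdx u q ^ 2)]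
  have hx := fderiv_div_sqrt_one_add_sq_add_sq (P := pdx u) (W := Wg u)
    (hu.hasFDerivAt_fderiv_apply (1, 0)) (hu.hasFDerivAt_fderiv_apply (0, 1)) rfl (1, 0)
  have hy := fderiv_div_sqrt_one_add_sq_add_sq (P := pdy u)
    (hu.hasFDerivAt_fderiv_apply (0, 1)) (hu.hasFDerivAt_fderiv_apply (1, 0)) hWy (0, 1)
  have hsymm := hu.isSymmSndFDerivAt (by simp) (0, 1) (1, 0)
  have hlevel : ((pdy u p, -pdx u p) : ℝ × ℝ) = pdy u p • (1, 0) + (-pdx u p) • (0, 1) := by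
    simp
  change fderiv ℝ (fun q => pdx u q / Wg u q) p (1, 0)
    + fderiv ℝ (fun q => pdy u q / Wg u q) p (0, 1) = _
  rw [hx, hy, hlevel]
  simp only [map_add, map_smul, add_apply, smul_apply, ContinuousLinearMap.flip_apply,
    smul_eq_mul, hsymm, pdx, pdy]
  ring

theorem divW_nonpos_of_fderiv_fderiv_nonpos {u : ℝ × ℝ → ℝ} {p : ℝ × ℝ}
    (hu : ContDiffAt ℝ 2 u p) (hH : ∀ e, fderiv ℝ (fderiv ℝ u) p e e ≤ 0) : divW u p ≤ 0 := by
  rw [divW_eq hu]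
  exact div_nonpos_of_nonpos_of_nonneg (by linarith [hH (1, 0), hH (0, 1), hH (pdy u p, -pdx u p)])
    (pow_pos (Wg_pos u p) 3).le

theorem le_divW_of_le_fderiv_fderiv {u : ℝ × ℝ → ℝ} {p : ℝ × ℝ} {κ : ℝ}
    (hu : ContDiffAt ℝ 2 u p)
    (hH : ∀ e : ℝ × ℝ, κ * (e.1 ^ 2 + e.2 ^ 2) ≤ fderiv ℝ (fderiv ℝ u) p e e) :
    κ * (1 + Wg u p ^ 2) / Wg u p ^ 3 ≤ divW u p := by
  rw [divW_eq hu, Wg_sq]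
  refine div_le_div_of_nonneg_right ?_ (pow_pos (Wg_pos u p) 3).le
  have h1 := hH (1, 0)
  have h2 := hH (0, 1)
  have h3 := hH (pdy u p, -pdx u p)
  simp only [neg_sq] at h1 h2 h3
  linarith

noncomputable def paraboloid (β : ℝ) (c q : ℝ × ℝ) : ℝ :=
  β * ((q.1 - c.1) ^ 2 + (q.2 - c.2) ^ 2)

theorem contDiff_paraboloid (β : ℝ) (c : ℝ × ℝ) : ContDiff ℝ 2 (paraboloid β c) := by
  unfold paraboloid
  fun_prop

theorem hasFDerivAt_paraboloid (β : ℝ) (c q : ℝ × ℝ) :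
    HasFDerivAt (paraboloid β c)
      ((2 * β * (q.1 - c.1)) • ContinuousLinearMap.fst ℝ ℝ ℝ
        + (2 * β * (q.2 - c.2)) • ContinuousLinearMap.snd ℝ ℝ ℝ) q := by
  have h := ((((hasFDerivAt_fst (𝕜 := ℝ) (p := q)).sub_const c.1).pow 2).fun_add
    (((hasFDerivAt_snd (𝕜 := ℝ) (p := q)).sub_const c.2).pow 2)).const_mul β
  refine h.congr_fderiv ?_
  ext <;> simp only [Nat.add_one_sub_one, pow_one, nsmul_eq_mul, Nat.cast_ofNat, smul_add,
    ContinuousLinearMap.add_comp, ContinuousLinearMap.smul_comp, ContinuousLinearMap.fst_comp_inl,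
    ContinuousLinearMap.snd_comp_inl, ContinuousLinearMap.fst_comp_inr,
    ContinuousLinearMap.snd_comp_inr, smul_zero, add_zero, zero_add, smul_apply,
    ContinuousLinearMap.id_apply, smul_eq_mul, mul_one] <;> ring

theorem gradSq_paraboloid (β : ℝ) (c q : ℝ × ℝ) :
    gradSq (paraboloid β c) q = 4 * β ^ 2 * ((q.1 - c.1) ^ 2 + (q.2 - c.2) ^ 2) := by
  simp only [gradSq, pdx, pdy, (hasFDerivAt_paraboloid β c q).fderiv, add_apply, smul_apply,
    ContinuousLinearMap.coe_fst', ContinuousLinearMap.coe_snd', smul_eq_mul, mul_one, mul_zero,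
    add_zero, zero_add]
  ring

theorem fderiv_fderiv_paraboloid (β : ℝ) (c p e : ℝ × ℝ) :
    fderiv ℝ (fderiv ℝ (paraboloid β c)) p e e = 2 * β * (e.1 ^ 2 + e.2 ^ 2) := by
  have hD : fderiv ℝ (paraboloid β c) = fun q => (2 * β * (q.1 - c.1)) •
      ContinuousLinearMap.fst ℝ ℝ ℝ + (2 * β * (q.2 - c.2)) • ContinuousLinearMap.snd ℝ ℝ ℝ :=
    funext fun q => (hasFDerivAt_paraboloid β c q).fderiv
  have h := ((((hasFDerivAt_fst (𝕜 := ℝ) (p := p)).sub_const c.1).const_mul (2 * β)).smul_const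
    (ContinuousLinearMap.fst ℝ ℝ ℝ)).fun_add ((((hasFDerivAt_snd (𝕜 := ℝ) (p := p)).sub_const
      c.2).const_mul (2 * β)).smul_const (ContinuousLinearMap.snd ℝ ℝ ℝ))
  rw [hD, h.fderiv]
  simp only [add_apply, ContinuousLinearMap.smulRight_apply, smul_apply,
    ContinuousLinearMap.coe_fst', ContinuousLinearMap.coe_snd', smul_eq_mul]
  ring

section NoInteriorExtremum

variable {u : ℝ × ℝ → ℝ} {p : ℝ × ℝ} {μ : ℝ}

theorem one_div_add_lt_of_sq_mul_le {W : ℝ} (hμ : 0 ≤ μ) (hW : 0 < W)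
    (h : μ ^ 2 * (W ^ 2 - 1) ≤ 2 * (μ + 2) ^ 2) :
    1 / W + μ < 2 * (μ + 2) * (1 + W ^ 2) / W ^ 3 := by
  -- `(μ W)² ≤ μ² + 2 (μ + 2)² ≤ (2 μ + 3)²`
  have hμW : μ * W ≤ 2 * μ + 3 := by nlinarith [mul_nonneg hμ hW.le]
  rw [lt_div_iff₀ (by positivity)]
  have hexpand : (1 / W + μ) * W ^ 3 = W ^ 2 + μ * W * W ^ 2 := by field_simp
  nlinarith [sq_nonneg W]

theorem not_isLocalMax_of_divW_eq (hμ : 0 ≤ μ) (hu : ContDiffAt ℝ 2 u p)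
    (hpde : divW u p = 1 / Wg u p + μ) : ¬ IsLocalMax u p := fun hmax => by
  have hnonpos := divW_nonpos_of_fderiv_fderiv_nonpos hu (hmax.fderiv_fderiv_nonpos hu)
  have hpos : 0 < 1 / Wg u p := one_div_pos.mpr (Wg_pos u p)
  linarith

theorem not_isLocalMin_sub_paraboloid {c : ℝ × ℝ} (hμ : 0 ≤ μ) (hu : ContDiffAt ℝ 2 u p)
    (hpde : divW u p = 1 / Wg u p + μ)
    (hτ : μ ^ 2 * ((p.1 - c.1) ^ 2 + (p.2 - c.2) ^ 2) ≤ 1 / 2) :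
    ¬ IsLocalMin (u - paraboloid (μ + 2) c) p := fun hmin => by
  have hv := (contDiff_paraboloid (μ + 2) c).contDiffAt (x := p)
  have hgrad : fderiv ℝ u p = fderiv ℝ (paraboloid (μ + 2) c) p := by
    have h := hmin.fderiv_eq_zero
    rwa [fderiv_sub (hu.differentiableAt two_ne_zero) (hv.differentiableAt two_ne_zero),
      sub_eq_zero] at h
  have hW : Wg u p ^ 2 - 1 = 4 * (μ + 2) ^ 2 * ((p.1 - c.1) ^ 2 + (p.2 - c.2) ^ 2) := by
    rw [Wg_sq, ← gradSq_paraboloid, gradSq, pdx, pdy, pdx, pdy, hgrad]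
    ring
  have hle := le_divW_of_le_fderiv_fderiv (κ := 2 * (μ + 2)) hu fun e => by
    rw [← fderiv_fderiv_paraboloid (μ + 2) c p e]
    exact hmin.fderiv_fderiv_le_of_sub hu hv e
  have hlt := one_div_add_lt_of_sq_mul_le hμ (Wg_pos u p) (by rw [hW]; nlinarith)
  linarith

end NoInteriorExtremum

section Domain

open Metric

theorem LipschitzWith.exists_abs_sub_le_diam_div_two {X : Type*} [PseudoMetricSpace X]
    {f : X → ℝ} (hf : LipschitzWith 1 f) {s : Set X} (hs : Bornology.IsBounded s) :
    ∃ a, ∀ x ∈ s, |f x - a| ≤ diam s / 2 := by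
  have hbdd := hf.isBounded_image hs
  have hdiam : diam (f '' s) ≤ diam s := by
    refine diam_le_of_forall_dist_le diam_nonneg ?_
    rintro _ ⟨x, hx, rfl⟩ _ ⟨y, hy, rfl⟩
    have hlip : dist (f x) (f y) ≤ dist x y := by simpa using hf.dist_le_mul x y
    exact hlip.trans (dist_le_diam_of_mem hs hx hy)
  refine ⟨(sInf (f '' s) + sSup (f '' s)) / 2, fun x hx => ?_⟩
  have hinf := csInf_le hbdd.bddBelow (mem_image_of_mem f hx)
  have hsup := le_csSup hbdd.bddAbove (mem_image_of_mem f hx)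
  rw [Real.diam_eq hbdd] at hdiam
  rw [abs_sub_le_iff]
  constructor <;> linarith

theorem exists_sq_add_sq_le_diam_sq_div_two {s : Set (ℝ × ℝ)} (hs : Bornology.IsBounded s) :
    ∃ c : ℝ × ℝ, ∀ q ∈ closure s, (q.1 - c.1) ^ 2 + (q.2 - c.2) ^ 2 ≤ diam s ^ 2 / 2 := by
  have hsq : ∀ x d : ℝ, |x| ≤ d / 2 → x ^ 2 ≤ d ^ 2 / 4 := fun x d h => by
    nlinarith [abs_nonneg x, sq_abs x]
  obtain ⟨a, ha⟩ := LipschitzWith.prod_fst.exists_abs_sub_le_diam_div_two hs.closure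
  obtain ⟨b, hb⟩ := LipschitzWith.prod_snd.exists_abs_sub_le_diam_div_two hs.closure
  refine ⟨(a, b), fun q hq => ?_⟩
  have hx := hsq _ _ (ha q hq)
  have hy := hsq _ _ (hb q hq)
  rw [diam_closure] at hx hy
  dsimp only
  linarith

theorem IsOpen.exists_mem_frontier_isMinOn {X β : Type*} [TopologicalSpace X] [LinearOrder β]
    [TopologicalSpace β] [ClosedIicTopology β] {Ω : Set X} {f : X → β} (hΩ : IsOpen Ω)
    (hK : IsCompact (closure Ω)) (hne : Ω.Nonempty) (hf : ContinuousOn f (closure Ω))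
    (hloc : ∀ p ∈ Ω, ¬ IsLocalMin f p) : ∃ p₀ ∈ frontier Ω, IsMinOn f (closure Ω) p₀ := by
  obtain ⟨p₀, hp₀, hmin⟩ := hK.exists_isMinOn hne.closure hf
  refine ⟨p₀, ?_, hmin⟩
  rw [frontier, hΩ.interior_eq]
  exact ⟨hp₀, fun h => hloc p₀ h (hmin.isLocalMin (mem_of_superset (hΩ.mem_nhds h) subset_closure))⟩

theorem IsOpen.exists_mem_frontier_isMaxOn {X β : Type*} [TopologicalSpace X] [LinearOrder β]
    [TopologicalSpace β] [ClosedIciTopology β] {Ω : Set X} {f : X → β} (hΩ : IsOpen Ω)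
    (hK : IsCompact (closure Ω)) (hne : Ω.Nonempty) (hf : ContinuousOn f (closure Ω))
    (hloc : ∀ p ∈ Ω, ¬ IsLocalMax f p) : ∃ p₀ ∈ frontier Ω, IsMaxOn f (closure Ω) p₀ :=
  hΩ.exists_mem_frontier_isMinOn (f := OrderDual.toDual ∘ f) hK hne hf hloc

end Domain

theorem height_estimates_weighted_general (μ : ℝ) (hμ : 0 < μ) (Ω : Set (ℝ × ℝ))
    (hΩo : IsOpen Ω) (hΩb : Bornology.IsBounded Ω)
    (hdiam : Metric.diam Ω < 1 / μ)
    (φ : ℝ × ℝ → ℝ) (hφ : ContinuousOn φ (frontier Ω)) :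
    ∃ C₁ : ℝ, ∀ u : ℝ × ℝ → ℝ,
      ContDiffOn ℝ 2 u Ω → ContinuousOn u (closure Ω) →
      (∀ p ∈ Ω, divW u p = 1 / Wg u p + μ) →
      (∀ p ∈ frontier Ω, u p = φ p) →
      ∀ p ∈ Ω, C₁ ≤ u p ∧ u p ≤ sSup (φ '' frontier Ω) := by
  obtain ⟨c, hc⟩ := exists_sq_add_sq_le_diam_sq_div_two hΩb
  set v := paraboloid (μ + 2) c
  refine ⟨sInf (φ '' frontier Ω) - (μ + 2) * (Metric.diam Ω ^ 2 / 2), ?_⟩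
  intro u hu hucont hpde hbc p hp
  have hK := hΩb.isCompact_closure
  have hφK :=
    (hK.of_isClosed_subset isClosed_frontier frontier_subset_closure).image_of_continuousOn hφ
  have hC2 : ∀ q ∈ Ω, ContDiffAt ℝ 2 u q := fun q hq => hu.contDiffAt (hΩo.mem_nhds hq)
  have hτ : ∀ q ∈ Ω, μ ^ 2 * ((q.1 - c.1) ^ 2 + (q.2 - c.2) ^ 2) ≤ 1 / 2 := fun q hq => by
    have hμd : μ * Metric.diam Ω < 1 := by rwa [lt_div_iff₀ hμ, mul_comm] at hdiam
    nlinarith [hc q (subset_closure hq), mul_nonneg hμ.le (Metric.diam_nonneg (s := Ω))]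
  obtain ⟨p₁, hp₁, hmin⟩ := hΩo.exists_mem_frontier_isMinOn hK ⟨p, hp⟩
    (hucont.sub (contDiff_paraboloid _ c).continuous.continuousOn)
    fun q hq => not_isLocalMin_sub_paraboloid hμ.le (hC2 q hq) (hpde q hq) (hτ q hq)
  obtain ⟨p₂, hp₂, hmax⟩ := hΩo.exists_mem_frontier_isMaxOn hK ⟨p, hp⟩ hucont
    fun q hq => not_isLocalMax_of_divW_eq hμ.le (hC2 q hq) (hpde q hq)
  constructor
  · calc sInf (φ '' frontier Ω) - (μ + 2) * (Metric.diam Ω ^ 2 / 2) ≤ φ p₁ - v p₁ :=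
          sub_le_sub (csInf_le hφK.bddBelow (mem_image_of_mem φ hp₁))
            (mul_le_mul_of_nonneg_left (hc p₁ (frontier_subset_closure hp₁)) (by positivity))
      _ = u p₁ - v p₁ := by rw [hbc p₁ hp₁]
      _ ≤ u p - v p := hmin (subset_closure hp)
      _ ≤ u p := sub_le_self _ (by unfold v paraboloid; positivity)
  · calc u p ≤ u p₂ := hmax (subset_closure hp)
      _ = φ p₂ := hbc p₂ hp₂
      _ ≤ sSup (φ '' frontier Ω) := le_csSup hφK.bddAbove (mem_image_of_mem φ hp₂)

/-- Height estimates for solutions of the Dirichlet problem for the constant weighted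
mean curvature equation on a bounded domain with `diam Ω < 1/μ`. -/
theorem height_estimates_weighted (μ : ℝ) (hμ : 0 < μ) (Ω : Set (ℝ × ℝ))
    (hΩo : IsOpen Ω) (hΩc : IsConnected Ω) (hΩb : Bornology.IsBounded Ω)
    (hdiam : Metric.diam Ω < 1 / μ)
    (φ : ℝ × ℝ → ℝ) (hφ : ContinuousOn φ (frontier Ω)) :
    ∃ C₁ : ℝ, ∀ u : ℝ × ℝ → ℝ,
      ContDiffOn ℝ 2 u Ω → ContinuousOn u (closure Ω) →
      (∀ p ∈ Ω, divW u p = 1 / Wg u p + μ) →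
      (∀ p ∈ frontier Ω, u p = φ p) →
      ∀ p ∈ Ω, C₁ ≤ u p ∧ u p ≤ sSup (φ '' frontier Ω) :=
  height_estimates_weighted_general μ hμ Ω hΩo hΩb hdiam φ hφ
end
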